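/- Let d, k, a ≥ 1 be integers and let G = (V, E) be a d-uniform hypergraph with hs(G) ≤ k. Let U = {C ⊆ V : s_G(C) > ak} and let F = {D ∈ E : no C ∈ U satisfies C ⊆ D}. Then |F| ≤ d! · (ak)^d. -/

import Mathlib

open scoped Classical

/-- The minimum size of a hitting set of the family `F`: a finite set of
vertices intersecting every member of `F`. -/
noncomputable def hsNum {α : Type*} (F : Finset (Finset α)) : ℕ :=
  sInf {n | ∃ H : Finset α, (∀ D ∈ F, ∃ v ∈ H, v ∈ D) ∧ H.card = n}

/-- `T` is a sunflower with core `C` in the hypergraph with edge set `E`: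
a set of edges, each containing `C`, whose pairwise intersections equal `C`. -/
def IsSunflower {α : Type*} [DecidableEq α] (E : Finset (Finset α)) (C : Finset α)
    (T : Finset (Finset α)) : Prop :=
  T ⊆ E ∧ (∀ D ∈ T, C ⊆ D) ∧ ∀ D ∈ T, ∀ D' ∈ T, D ≠ D' → D ∩ D' = C

/-- `sunflowerNum E C` is the maximum number of petals of a sunflower with
core `C` in the hypergraph with edge set `E` (it is `0` if no edge contains `C`). -/
noncomputable def sunflowerNum {α : Type*} [DecidableEq α] (E : Finset (Finset α))
    (C : Finset α) : ℕ :=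
  sSup {n | ∃ T : Finset (Finset α), IsSunflower E C T ∧ T.card = n}

/-
Edges of `F` contain no large core, so a sunflower inside `F` with core `C` has at most `ak`
petals: `C` lies in one of its petals, hence `s_G(C) ≤ ak`. The bound is then the Erdős–Rado
sunflower lemma: if a `d`-uniform family has no sunflower with more than `s` petals, a maximal
set `M` of pairwise disjoint edges (a sunflower with empty core) has at most `s` members, so its
union `Y` has at most `s d` vertices and meets every edge; deleting `y` from the edges through
`y ∈ Y` gives a `(d-1)`-uniform family whose sunflowers lift back to sunflowers of `F`, and
induction bounds it by `(d-1)! s^(d-1)`.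
-/

section

open Finset

variable {α : Type*} [DecidableEq α]

theorem IsSunflower.mono {E E' : Finset (Finset α)} {C : Finset α} {T : Finset (Finset α)}
    (h : IsSunflower E C T) (hE : E ⊆ E') : IsSunflower E' C T :=
  ⟨h.1.trans hE, h.2⟩

theorem IsSunflower.card_le_sunflowerNum {E : Finset (Finset α)} {C : Finset α}
    {T : Finset (Finset α)} (h : IsSunflower E C T) : T.card ≤ sunflowerNum E C :=
  le_csSup ⟨E.card, by rintro n ⟨T', hT', rfl⟩; exact card_le_card hT'.1⟩ ⟨T, h, rfl⟩

theorem exists_isSunflower_empty_meeting_all (F : Finset (Finset α)) :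
    ∃ M, IsSunflower F ∅ M ∧ ∀ D ∈ F, D.Nonempty → ∃ A ∈ M, (A ∩ D).Nonempty := by
  obtain ⟨M, hM⟩ := (F.powerset.filter (IsSunflower F ∅)).exists_maximal ⟨∅, by
    simp [IsSunflower]⟩
  obtain ⟨-, hMF, -, hMdisj⟩ := mem_filter.mp hM.prop
  refine ⟨M, ⟨hMF, fun D _ => empty_subset D, hMdisj⟩, fun D hD hDne => ?_⟩
  by_contra! hmiss
  have hDM : D ∉ M := fun h => by
    rw [← inter_self D, hmiss D h] at hDne
    exact not_nonempty_empty hDne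
  have hins : insert D M ∈ F.powerset.filter (IsSunflower F ∅) := by
    refine mem_filter.mpr ⟨mem_powerset.mpr (insert_subset hD hMF),
      insert_subset hD hMF, fun D _ => empty_subset D, ?_⟩
    simp only [mem_insert]
    rintro A (rfl | hA) B (rfl | hB) hAB
    · exact absurd rfl hAB
    · rw [inter_comm]; exact hmiss B hB
    · exact hmiss A hA
    · exact hMdisj A hA B hB hAB
  exact hDM (by rw [hM.eq_of_le hins (subset_insert D M)]; exact mem_insert_self D M)

def vertexLink (F : Finset (Finset α)) (y : α) : Finset (Finset α) :=
  (F.filter (y ∈ ·)).image (·.erase y)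

theorem card_vertexLink (F : Finset (Finset α)) (y : α) :
    (vertexLink F y).card = (F.filter (y ∈ ·)).card := by
  refine card_image_of_injOn fun A hA B hB hAB => ?_
  rw [← insert_erase (mem_filter.mp (mem_coe.mp hA)).2,
    ← insert_erase (mem_filter.mp (mem_coe.mp hB)).2]
  exact congrArg (insert y) hAB

theorem mem_vertexLink {F : Finset (Finset α)} {y : α} {D : Finset α} :
    D ∈ vertexLink F y ↔ y ∉ D ∧ insert y D ∈ F := by
  simp only [vertexLink, mem_image, mem_filter]
  constructor
  · rintro ⟨D', ⟨hD', hy⟩, rfl⟩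
    exact ⟨notMem_erase y D', by rwa [insert_erase hy]⟩
  · rintro ⟨hy, hD⟩
    exact ⟨insert y D, ⟨hD, mem_insert_self y D⟩, erase_insert hy⟩

theorem card_of_mem_vertexLink {F : Finset (Finset α)} {d : ℕ}
    (huni : ∀ D ∈ F, D.card = d + 1) {y : α} {D : Finset α} (hD : D ∈ vertexLink F y) :
    D.card = d := by
  obtain ⟨hy, hD⟩ := mem_vertexLink.mp hD
  simpa [card_insert_of_notMem hy] using huni _ hD

theorem IsSunflower.insert_of_vertexLink {F : Finset (Finset α)} {y : α} {C : Finset α}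
    {T : Finset (Finset α)} (h : IsSunflower (vertexLink F y) C T) :
    IsSunflower F (insert y C) (T.image (insert y)) := by
  obtain ⟨hTF, hTC, hTint⟩ := h
  refine ⟨?_, ?_, ?_⟩
  · simp only [image_subset_iff]
    exact fun D hD => (mem_vertexLink.mp (hTF hD)).2
  · simp only [mem_image, forall_exists_index, and_imp]
    rintro _ D hD rfl
    exact insert_subset_insert y (hTC D hD)
  · simp only [mem_image, forall_exists_index, and_imp]
    rintro _ A hA rfl _ B hB rfl hAB
    rw [← insert_inter_distrib, hTint A hA B hB fun h => hAB (h ▸ rfl)]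

theorem card_image_insert_of_subset_vertexLink {F : Finset (Finset α)} {y : α}
    {T : Finset (Finset α)} (hT : T ⊆ vertexLink F y) : (T.image (insert y)).card = T.card := by
  refine card_image_of_injOn fun A hA B hB hAB => ?_
  rw [← erase_insert (mem_vertexLink.mp (hT hA)).1,
    ← erase_insert (mem_vertexLink.mp (hT hB)).1]
  exact congrArg (·.erase y) hAB

theorem card_le_of_isSunflower_vertexLink {F : Finset (Finset α)} {s : ℕ}
    (hsun : ∀ C T, IsSunflower F C T → T.card ≤ s) (y : α) :
    ∀ C T, IsSunflower (vertexLink F y) C T → T.card ≤ s := fun _ _ h =>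
  card_image_insert_of_subset_vertexLink h.1 ▸ hsun _ _ (IsSunflower.insert_of_vertexLink h)

theorem card_le_factorial_mul_pow_of_sunflower_le (d s : ℕ) (F : Finset (Finset α))
    (huni : ∀ D ∈ F, D.card = d) (hsun : ∀ C T, IsSunflower F C T → T.card ≤ s) :
    F.card ≤ d.factorial * s ^ d := by
  induction d generalizing F with
  | zero =>
    simpa using card_le_card fun D hD => mem_singleton.mpr (card_eq_zero.mp (huni D hD))
  | succ d ih =>
    obtain ⟨M, hM, hMmeet⟩ := exists_isSunflower_empty_meeting_all F
    have hMcard : M.card ≤ s := hsun ∅ M hM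
    set Y := M.biUnion id
    have hYcard : Y.card ≤ s * (d + 1) := calc
      Y.card ≤ ∑ A ∈ M, A.card := card_biUnion_le
      _ = M.card * (d + 1) := by
        rw [sum_congr rfl fun A hA => huni A (hM.1 hA), sum_const, smul_eq_mul]
      _ ≤ s * (d + 1) := Nat.mul_le_mul_right _ hMcard
    have hcover : F ⊆ Y.biUnion fun y => F.filter (y ∈ ·) := by
      intro D hD
      obtain ⟨A, hA, x, hx⟩ := hMmeet D hD (card_pos.mp (by rw [huni D hD]; omega))
      rw [mem_inter] at hx
      exact mem_biUnion.mpr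
        ⟨x, mem_biUnion.mpr ⟨A, hA, hx.1⟩, mem_filter.mpr ⟨hD, hx.2⟩⟩
    have hlink (y : α) : (F.filter (y ∈ ·)).card ≤ d.factorial * s ^ d := by
      rw [← card_vertexLink]
      exact ih _ (fun _ => card_of_mem_vertexLink huni)
        (card_le_of_isSunflower_vertexLink hsun y)
    calc F.card ≤ ∑ y ∈ Y, (F.filter (y ∈ ·)).card :=
          (card_le_card hcover).trans card_biUnion_le
      _ ≤ Y.card * (d.factorial * s ^ d) := by
          simpa using sum_le_sum fun y _ => hlink y
      _ ≤ s * (d + 1) * (d.factorial * s ^ d) := Nat.mul_le_mul_right _ hYcard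
      _ = (d + 1).factorial * s ^ (d + 1) := by rw [Nat.factorial_succ, pow_succ]; ring

end

theorem stmt_8_general {α : Type*} [DecidableEq α] (d k a : ℕ)
    (E : Finset (Finset α)) (huni : ∀ D ∈ E, D.card = d) :
    (E.filter (fun D => ∀ C ⊆ D, sunflowerNum E C ≤ a * k)).card ≤
      Nat.factorial d * (a * k) ^ d := by
  refine card_le_factorial_mul_pow_of_sunflower_le d (a * k) _
    (fun D hD => huni D (Finset.mem_filter.mp hD).1) fun C T hT => ?_
  obtain rfl | ⟨D, hD⟩ := T.eq_empty_or_nonempty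
  · exact Nat.zero_le _
  · exact (hT.mono (Finset.filter_subset _ E)).card_le_sunflowerNum.trans
      ((Finset.mem_filter.mp (hT.1 hD)).2 C (hT.2.1 D hD))

theorem stmt_8 {α : Type*} [DecidableEq α] (d k a : ℕ)
    (hd : 1 ≤ d) (hk : 1 ≤ k) (ha : 1 ≤ a)
    (E : Finset (Finset α)) (huni : ∀ D ∈ E, D.card = d)
    (hhs : hsNum E ≤ k) :
    (E.filter (fun D => ∀ C ⊆ D, sunflowerNum E C ≤ a * k)).card ≤
      Nat.factorial d * (a * k) ^ d :=
  stmt_8_general d k a E huni
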